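/- Let S ⊆ {0,1}^n be nonempty and closed under pointwise AND. If S has at least two elements, then the minimum Hamming distance between distinct elements of S is attained by a pair m₁ < m₂ (i.e., m₁ ≤ m₂ componentwise and m₁ ≠ m₂). -/
import Mathlib


def hd {n : ℕ} (m m' : Fin n → Bool) : ℕ :=
  (Finset.univ.filter fun i => m i ≠ m' i).card

lemma hd_eq_sum {n : ℕ} (a b : Fin n → Bool) :
    hd a b = ∑ i, if a i ≠ b i then 1 else 0 := by
  simp [hd, Finset.card_filter]

lemma hd_split {n : ℕ} (a b : Fin n → Bool) :
    hd a (fun i => a i && b i) + hd (fun i => a i && b i) b = hd a b := by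
  simp only [hd_eq_sum, ← Finset.sum_add_distrib]
  apply Finset.sum_congr rfl
  intro i _
  cases h1 : a i <;> cases h2 : b i <;> simp [h1, h2]

lemma hd_zero {n : ℕ} (a b : Fin n → Bool) (h : hd a b = 0) : a = b := by
  funext i
  by_contra hc
  have : i ∈ Finset.univ.filter fun i => a i ≠ b i := by simp [hc]
  rw [hd, Finset.card_eq_zero] at h
  simp [h] at this

theorem stmt_6 {n : ℕ} (S : Set (Fin n → Bool))
    (hand : ∀ m₁ ∈ S, ∀ m₂ ∈ S, (fun i => m₁ i && m₂ i) ∈ S)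
    (htwo : ∃ a ∈ S, ∃ b ∈ S, a ≠ b) :
    ∃ m₁ ∈ S, ∃ m₂ ∈ S, (∀ i, m₁ i ≤ m₂ i) ∧ m₁ ≠ m₂ ∧
      ∀ a ∈ S, ∀ b ∈ S, a ≠ b → hd m₁ m₂ ≤ hd a b := by
  classical
  have hP : ∃ d, ∃ a ∈ S, ∃ b ∈ S, a ≠ b ∧ hd a b = d := by
    obtain ⟨a, ha, b, hb, hab⟩ := htwo
    exact ⟨hd a b, a, ha, b, hb, hab, rfl⟩
  set d := Nat.find hP with hdset
  obtain ⟨a, ha, b, hb, hab, hd_ab⟩ := Nat.find_spec hP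
  have hmin : ∀ x ∈ S, ∀ y ∈ S, x ≠ y → d ≤ hd x y := by
    intro x hx y hy hxy
    apply Nat.find_le
    exact ⟨x, hx, y, hy, hxy, rfl⟩
  set c : Fin n → Bool := fun i => a i && b i with hc
  have hcS : c ∈ S := hand a ha b hb
  have hsum : hd a c + hd c b = hd a b := hd_split a b
  have hdpos : 0 < d := by
    rcases Nat.eq_zero_or_pos d with h0 | h
    · exact absurd (hd_zero a b (h0 ▸ hd_ab)) hab
    · exact h
  by_cases hca : c = a
  · refine ⟨a, ha, b, hb, ?_, hab, ?_⟩
    · intro i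
      have h := congrFun hca i
      simp only [hc] at h
      rw [← h]
      exact Bool.and_le_right _ _
    · intro x hx y hy hxy
      exact hd_ab ▸ hmin x hx y hy hxy
  · by_cases hcb : c = b
    · refine ⟨b, hb, a, ha, ?_, Ne.symm hab, ?_⟩
      · intro i
        have h := congrFun hcb i
        simp only [hc] at h
        rw [← h]
        exact Bool.and_le_left _ _
      · intro x hx y hy hxy
        have : hd b a = hd a b := by
          simp [hd]; congr 1; ext i; simp [ne_comm]
        rw [this, hd_ab]
        exact hmin x hx y hy hxy
    · exfalso
      have h1 : d ≤ hd a c := hmin a ha c hcS fun h => hca h.symm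
      have h2 : d ≤ hd c b := hmin c hcS b hb hcb
      omega
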